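/- arXiv:2305.09462 — 4 statements merged into one kernel-verified Lean document; each statement's English description precedes it below -/
import Mathlib

section
/- The solutions (a, b) of the unit equation a + b = 1 with a and b both units of ℤ[1/2] are exactly (2, -1), (-1, 2), and (1/2, 1/2). -/
/-!
The units of `ℤ[1/2]` are `±2 ^ n` (`n : ℤ`), since a divisor of a power of `2` in `ℤ` is `±` a
power of `2`. The signs in `±2 ^ m ± 2 ^ n = 1` cannot both be negative, and moving a negative
term to the other side leaves an equation `2 ^ i + 2 ^ j = 2 ^ k`. Dividing it by the smaller of
`2 ^ i`, `2 ^ j` gives `1 + 2 ^ d = 2 ^ e` with `d, e : ℕ`, and parity forces `d = 0`, `e = 1`.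
-/
/-- Membership in the subring `ℤ[1/2]` of `ℚ`: rationals whose denominator
is a power of `2`. -/
def InZHalf (q : ℚ) : Prop := ∃ (a : ℤ) (n : ℕ), q = a / 2 ^ n

/-- `q` is a unit of the ring `ℤ[1/2]`. -/
def IsUnitZHalf (q : ℚ) : Prop := InZHalf q ∧ ∃ r : ℚ, InZHalf r ∧ q * r = 1

lemma eq_zero_and_eq_one_of_one_add_two_pow_eq_two_pow {d e : ℕ} (h : 1 + 2 ^ d = 2 ^ e) :
    d = 0 ∧ e = 1 := by
  rcases d with _ | d <;> rcases e with _ | e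
  · simp at h
  · simpa [pow_succ] using h
  · simp at h
  · rw [pow_succ, pow_succ] at h
    omega

lemma eq_and_eq_add_one_of_two_zpow_add_two_zpow_eq {K : Type*} [Field K] [LinearOrder K]
    [IsStrictOrderedRing K] {i j k : ℤ} (h : (2 : K) ^ i + 2 ^ j = 2 ^ k) : i = j ∧ k = i + 1 := by
  wlog hij : i ≤ j generalizing i j
  · obtain ⟨rfl, rfl⟩ := this (by rwa [add_comm]) (by omega)
    simp
  obtain ⟨d, hji⟩ := Int.eq_ofNat_of_zero_le (sub_nonneg.mpr hij)
  obtain rfl : j = i + d := by omega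
  have hd : 1 + (2 : K) ^ d = 2 ^ (k - i) := by
    rw [zpow_sub₀ two_ne_zero, eq_div_iff (by positivity), ← h, zpow_add₀ two_ne_zero, zpow_natCast]
    ring
  have hki : 0 < k - i :=
    (one_lt_zpow_iff_right₀ one_lt_two).mp (hd ▸ lt_add_of_pos_right 1 (by positivity))
  obtain ⟨e, he⟩ := Int.eq_ofNat_of_zero_le hki.le
  rw [he, zpow_natCast] at hd
  obtain ⟨rfl, rfl⟩ :=
    eq_zero_and_eq_one_of_one_add_two_pow_eq_two_pow (d := d) (e := e) (by exact_mod_cast hd)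
  omega

lemma inZHalf_two_zpow (n : ℤ) : InZHalf ((2 : ℚ) ^ n) := by
  rcases Int.eq_nat_or_neg n with ⟨n, rfl | rfl⟩
  · exact ⟨2 ^ n, 0, by simp⟩
  · exact ⟨1, n, by simp⟩

lemma InZHalf.neg {q : ℚ} (h : InZHalf q) : InZHalf (-q) := by
  obtain ⟨a, n, rfl⟩ := h
  exact ⟨-a, n, by push_cast; ring⟩

lemma isUnitZHalf_iff {q : ℚ} : IsUnitZHalf q ↔ ∃ n : ℤ, q = 2 ^ n ∨ q = -2 ^ n := by
  constructor
  · rintro ⟨⟨x, n, rfl⟩, r, ⟨y, m, rfl⟩, hqr⟩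
    have hxy : x * y = 2 ^ (n + m) := by
      have : (x * y : ℚ) = 2 ^ (n + m) := by
        field_simp at hqr
        rw [pow_add, hqr]
      exact_mod_cast this
    obtain ⟨k, -, hk⟩ := (dvd_prime_pow Int.prime_two _).mp (Dvd.intro y hxy)
    refine ⟨k - n, ?_⟩
    rw [zpow_sub₀ two_ne_zero, zpow_natCast, zpow_natCast]
    rcases Int.associated_iff.mp hk with rfl | rfl
    · left; push_cast; rfl
    · right; push_cast; ring
  · rintro ⟨n, rfl | rfl⟩
    · exact ⟨inZHalf_two_zpow n, 2 ^ (-n), inZHalf_two_zpow (-n),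
        by rw [zpow_neg, mul_inv_cancel₀ (by positivity)]⟩
    · exact ⟨(inZHalf_two_zpow n).neg, -2 ^ (-n), (inZHalf_two_zpow (-n)).neg,
        by rw [neg_mul_neg, zpow_neg, mul_inv_cancel₀ (by positivity)]⟩

/-- The solutions of the unit equation `a + b = 1` in `ℤ[1/2]` are exactly
`(2, -1)`, `(-1, 2)` and `(1/2, 1/2)`. -/
theorem stmt_3 (a b : ℚ) :
    (IsUnitZHalf a ∧ IsUnitZHalf b ∧ a + b = 1) ↔
      ((a, b) = ((2 : ℚ), (-1 : ℚ)) ∨ (a, b) = ((-1 : ℚ), (2 : ℚ)) ∨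
        (a, b) = ((1/2 : ℚ), (1/2 : ℚ))) := by
  constructor
  · rintro ⟨ha, hb, hab⟩
    obtain ⟨m, rfl | rfl⟩ := isUnitZHalf_iff.mp ha <;>
      obtain ⟨n, rfl | rfl⟩ := isUnitZHalf_iff.mp hb
    · obtain ⟨rfl, hm⟩ :=
        eq_and_eq_add_one_of_two_zpow_add_two_zpow_eq (K := ℚ) (k := 0) (by simpa using hab)
      obtain rfl : m = -1 := by omega
      norm_num
    · obtain ⟨rfl, rfl⟩ := eq_and_eq_add_one_of_two_zpow_add_two_zpow_eq (K := ℚ)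
        (i := n) (j := 0) (k := m) (by rw [zpow_zero]; linarith)
      norm_num
    · obtain ⟨rfl, rfl⟩ := eq_and_eq_add_one_of_two_zpow_add_two_zpow_eq (K := ℚ)
        (i := m) (j := 0) (k := n) (by rw [zpow_zero]; linarith)
      norm_num
    · have : (0 : ℚ) < 2 ^ m + 2 ^ n := by positivity
      linarith
  · rintro (h | h | h) <;> obtain ⟨rfl, rfl⟩ := Prod.ext_iff.mp h <;>
      refine ⟨isUnitZHalf_iff.mpr ?_, isUnitZHalf_iff.mpr ?_, by norm_num⟩
    exacts [⟨1, by norm_num⟩, ⟨0, by norm_num⟩, ⟨0, by norm_num⟩, ⟨1, by norm_num⟩,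
      ⟨-1, by norm_num⟩, ⟨-1, by norm_num⟩]
end

section
/- Let p ≥ 5 be a prime. Then in 𝔽_p[X] one has Σ_{k=1}^{p-1} k² X^k = X(X+1)(X-1)^{p-3}. -/
/-!
Multiplying by `(X - 1)³` telescopes `Σ_{k ≤ n} k² X^k` to a closed form. For
`n = p - 1` in characteristic `p` its coefficients reduce, via `n ≡ -1`, to
`X (X + 1) (X^p - 1) = X (X + 1) (X - 1)^p`, and cancelling `(X - 1)³` in the domain
`𝔽_p[X]` leaves `X (X + 1) (X - 1)^(p - 3)`.
-/

open Polynomial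

theorem X_sub_one_pow_three_mul_sum_sq_mul_X_pow (R : Type*) [CommRing R] (n : ℕ) :
    (X - 1) ^ 3 * ∑ k ∈ Finset.Icc 1 n, C ((k : R) ^ 2) * X ^ k =
      C ((n : R) ^ 2) * X ^ (n + 3) - C (2 * (n : R) ^ 2 + 2 * n - 1) * X ^ (n + 2)
        + C (((n : R) + 1) ^ 2) * X ^ (n + 1) - X ^ 2 - X := by
  induction n with
  | zero => simp
  | succ n ih =>
    rw [Finset.sum_Icc_succ_top (by omega), mul_add, ih]
    push_cast
    simp only [map_add, map_sub, map_mul, map_pow, map_one, map_ofNat, map_natCast]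
    ring

theorem X_sub_one_pow_three_mul_sum_sq_mul_X_pow_of_charP (R : Type*) [CommRing R] (p : ℕ)
    [Fact p.Prime] [CharP R p] :
    (X - 1) ^ 3 * ∑ k ∈ Finset.Icc 1 (p - 1), C ((k : R) ^ 2) * X ^ k =
      X * (X + 1) * (X - 1) ^ p := by
  have hp : 1 ≤ p := (Fact.out : p.Prime).one_le
  have hcast : ((p - 1 : ℕ) : R) = -1 := by
    rw [Nat.cast_sub hp, CharP.cast_eq_zero, Nat.cast_one, zero_sub]
  rw [X_sub_one_pow_three_mul_sum_sq_mul_X_pow, hcast, sub_pow_char, one_pow,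
    show p - 1 + 3 = p + 2 by omega, show p - 1 + 2 = p + 1 by omega, Nat.sub_add_cancel hp]
  simp only [map_add, map_sub, map_mul, map_pow, map_one, map_ofNat, map_neg]
  ring

/-- For a prime `p ≥ 5`, in `𝔽_p[X]`:
`Σ_{k=1}^{p-1} k² X^k = X (X+1) (X-1)^{p-3}`. -/
theorem stmt_7 (p : ℕ) (hp : p.Prime) (hp5 : 5 ≤ p) :
    ∑ k ∈ Finset.Icc 1 (p - 1), C ((k : ZMod p) ^ 2) * X ^ k =
      X * (X + 1) * (X - 1) ^ (p - 3) := by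
  have := Fact.mk hp
  have hX : (X - 1 : (ZMod p)[X]) ^ 3 ≠ 0 :=
    pow_ne_zero 3 (by simpa only [map_one] using X_sub_C_ne_zero (1 : ZMod p))
  apply mul_left_cancel₀ hX
  rw [X_sub_one_pow_three_mul_sum_sq_mul_X_pow_of_charP, mul_left_comm, ← pow_add,
    Nat.add_sub_cancel' (by omega)]
end

section
/- Let K be a number field whose group of roots of unity μ(K) has order m, let N ≥ 1, and let G = Gal(K(μ_N)/K) act on the group μ_N of N-th roots of unity. Then the group cohomology H¹(G, μ_N) is annihilated by 2m. -/
/-!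
Identify `μ_N` with `ℤ/N` and let `χ : G → ℤ` lift the cyclotomic character. Since `G` is
abelian, a cocycle `c` satisfies `(χ g - 1) c(h) = (χ h - 1) c(g)`, so every `r` in the ideal
`I = (N, χ g - 1 : g ∈ G)` of `ℤ` makes `r c` a coboundary. An integer `k` with `I k ⊆ Nℤ` gives a
`G`-invariant root of unity `ζ^k`, which lies in `K` and is therefore killed by `m`; as `ℤ/N` is
self-dual (`I` is the annihilator modulo `N` of its annihilator) this forces `m ∈ I`.
-/

theorem Ideal.mem_span_insert_of_forall_dvd_mul {R : Type*} [CommRing R] [IsDomain R]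
    [IsPrincipalIdealRing R] {S : Set R} {n r : R} (hn : n ≠ 0)
    (h : ∀ k, (∀ s ∈ S, n ∣ s * k) → n ∣ r * k) : r ∈ Ideal.span (insert n S) := by
  obtain ⟨d, hd⟩ := (IsPrincipalIdealRing.principal (Ideal.span (insert n S))).principal
  rw [Ideal.submodule_span_eq] at hd
  have hdvd : ∀ s ∈ insert n S, d ∣ s := fun s hs =>
    Ideal.mem_span_singleton.mp (hd ▸ Ideal.subset_span hs)
  obtain ⟨e, rfl⟩ := hdvd n (Set.mem_insert n S)
  have he : e ≠ 0 := right_ne_zero_of_mul hn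
  have hre : d * e ∣ r * e := h e fun s hs => by
    obtain ⟨t, rfl⟩ := hdvd s (Set.mem_insert_of_mem _ hs)
    exact ⟨t, by ring⟩
  rw [hd, Ideal.mem_span_singleton]
  exact (mul_dvd_mul_iff_right he).mp hre

section Cocycle

variable {G R M : Type*} [Mul G] [IsMulCommutative G] [CommRing R] [AddCommGroup M] [Module R M]
  {χ : G → R} {c : G → M}

theorem sub_one_smul_comm_of_cocycle (hc : ∀ g h, c (g * h) = c g + χ g • c h) (g h : G) :
    (χ g - 1) • c h = (χ h - 1) • c g := by
  have := hc g h
  rw [mul_comm' g h, hc h g] at this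
  linear_combination (norm := module) -this

theorem exists_smul_eq_sub_one_smul_of_mem_span (hc : ∀ g h, c (g * h) = c g + χ g • c h)
    {n : R} (hn : ∀ g, n • c g = 0) {r : R}
    (hr : r ∈ Ideal.span (insert n (Set.range fun g => χ g - 1))) :
    ∃ y : M, ∀ h, r • c h = (χ h - 1) • y := by
  induction hr using Submodule.span_induction with
  | mem s hs =>
    obtain rfl | ⟨g, rfl⟩ := hs
    · exact ⟨0, fun h => by rw [hn, smul_zero]⟩
    · exact ⟨c g, sub_one_smul_comm_of_cocycle hc g⟩
  | zero => exact ⟨0, fun h => by rw [zero_smul, smul_zero]⟩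
  | add s t _ _ hs ht =>
    obtain ⟨y, hy⟩ := hs
    obtain ⟨z, hz⟩ := ht
    exact ⟨y + z, fun h => by rw [add_smul, hy, hz, smul_add]⟩
  | smul a s _ hs =>
    obtain ⟨y, hy⟩ := hs
    exact ⟨a • y, fun h => by rw [smul_eq_mul, mul_smul, hy, smul_comm]⟩

end Cocycle

theorem NumberField.pow_torsionOrder_eq_one {K : Type*} [Field K] [NumberField K] {u : K} {n : ℕ}
    (hn : n ≠ 0) (hu : u ^ n = 1) : u ^ NumberField.Units.torsionOrder K = 1 := by
  have hfin : IsOfFinOrder u := isOfFinOrder_iff_pow_eq_one.mpr ⟨n, Nat.pos_of_ne_zero hn, hu⟩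
  have : NeZero (orderOf u) := ⟨hfin.orderOf_pos.ne'⟩
  exact orderOf_dvd_iff_pow_eq_one.mp
    (NumberField.Units.dvd_torsionOrder_of_isPrimitiveRoot (IsPrimitiveRoot.orderOf u))

theorem pow_eq_one_of_forall_smul_eq {K L : Type*} [Field K] [Field L] [Algebra K L]
    [IsGalois K L] {n m : ℕ} (hK : ∀ a : K, a ^ n = 1 → a ^ m = 1) {u : Lˣ}
    (hfix : ∀ g : Gal(L/K), g • u = u) (hu : u ^ n = 1) : u ^ m = 1 := by
  obtain ⟨a, ha⟩ := (InfiniteGalois.mem_range_algebraMap_iff_fixed (u : L)).mpr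
    fun g => congrArg Units.val (hfix g)
  have han : a ^ n = 1 := (algebraMap K L).injective <| by
    rw [map_pow, ha, map_one, ← Units.val_pow_eq_pow_val, hu, Units.val_one]
  ext
  rw [Units.val_pow_eq_pow_val, ← ha, ← map_pow, hK a han, map_one, Units.val_one]

theorem exists_smul_eq_zpow_of_mem_rootsOfUnity (K L : Type*) [Field K] [Field L] [Algebra K L]
    (n : ℕ) [NeZero n] :
    ∃ χ : Gal(L/K) → ℤ, ∀ g, ∀ u ∈ rootsOfUnity n L, g • u = u ^ χ g :=
  ⟨fun g => (modularCyclotomicCharacter' L n g).val.val, fun g u hu => Units.ext <| by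
    rw [zpow_natCast, Units.val_pow_eq_pow_val]
    exact modularCyclotomicCharacter'.spec' L n (g : L ≃+* L) hu⟩

theorem exists_pow_eq_inv_mul_smul_of_cocycle {K L : Type*} [Field K] [Field L] [Algebra K L]
    [IsAbelianGalois K L] {N : ℕ} [NeZero N] {ζ : Lˣ} (hζ : IsPrimitiveRoot ζ N) {m : ℕ}
    (hK : ∀ a : K, a ^ N = 1 → a ^ m = 1) (f : Gal(L/K) → Lˣ)
    (hmem : ∀ g, f g ∈ rootsOfUnity N L) (hcocycle : ∀ g h, f (g * h) = f g * g • f h) :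
    ∃ ζ' ∈ rootsOfUnity N L, ∀ g, f g ^ m = ζ'⁻¹ * g • ζ' := by
  obtain ⟨χ, hχ⟩ := exists_smul_eq_zpow_of_mem_rootsOfUnity K L N
  let c : Gal(L/K) → Additive (rootsOfUnity N L) := fun g => Additive.ofMul ⟨f g, hmem g⟩
  have hc : ∀ g h, c (g * h) = c g + χ g • c h := fun g h => by
    ext
    simp [c, hcocycle, hχ g _ (hmem h)]
  have hcN : ∀ g, (N : ℤ) • c g = 0 := fun g => by
    ext
    simp [c, (mem_rootsOfUnity _ _).mp (hmem g)]
  have hm : (m : ℤ) ∈ Ideal.span (insert (N : ℤ) (Set.range fun g => χ g - 1)) := by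
    refine Ideal.mem_span_insert_of_forall_dvd_mul (by exact_mod_cast NeZero.ne N) fun k hk => ?_
    have hfix : ∀ g : Gal(L/K), g • ζ ^ k = ζ ^ k := fun g => by
      rw [smul_zpow', hχ g ζ hζ.mem_rootsOfUnity, ← zpow_mul, ← mul_inv_eq_one, ← zpow_sub,
        ← sub_one_mul, hζ.zpow_eq_one_iff_dvd]
      exact hk _ ⟨g, rfl⟩
    have hζkN : (ζ ^ k) ^ N = 1 := by
      rw [← zpow_natCast, ← zpow_mul, mul_comm, zpow_mul, zpow_natCast, hζ.pow_eq_one, one_zpow]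
    rw [← hζ.zpow_eq_one_iff_dvd, mul_comm, zpow_mul, zpow_natCast,
      pow_eq_one_of_forall_smul_eq hK hfix hζkN]
  obtain ⟨y, hy⟩ := exists_smul_eq_sub_one_smul_of_mem_span hc hcN hm
  refine ⟨(y.toMul : Lˣ), y.toMul.2, fun g => ?_⟩
  have hyg : f g ^ m = (y.toMul : Lˣ) ^ (χ g - 1) := by
    simpa [c] using congrArg (fun z => ((z.toMul : rootsOfUnity N L) : Lˣ)) (hy g)
  rw [hyg, hχ g _ y.toMul.2, zpow_sub_one, mul_comm]

/-- Let `K` be a number field whose group of roots of unity has order `m`,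
let `N ≥ 1`, and let `G = Gal(K(μ_N)/K)` act on `μ_N`. Then `H¹(G, μ_N)`
is annihilated by `2m`: every cocycle `f : G → μ_N`, raised to the power
`2m`, is a coboundary. -/
theorem stmt_15 (K : Type*) [Field K] [NumberField K] (N : ℕ+)
    (m : ℕ) (hm : m = (NumberField.Units.torsionOrder K : ℕ))
    (f : (CyclotomicField N K ≃ₐ[K] CyclotomicField N K) → (CyclotomicField N K)ˣ)
    (hmem : ∀ g, f g ∈ rootsOfUnity N (CyclotomicField N K))
    (hcocycle : ∀ g h, f (g * h) = f g * g • f h) :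
    ∃ ζ : (CyclotomicField N K)ˣ, ζ ∈ rootsOfUnity N (CyclotomicField N K) ∧
      ∀ g, (f g) ^ (2 * m) = ζ⁻¹ * g • ζ := by
  have := IsCyclotomicExtension.isAbelianGalois {(N : ℕ)} K (CyclotomicField N K)
  have hprim := (IsCyclotomicExtension.zeta_spec N K (CyclotomicField N K)).isUnit_unit N.ne_zero
  obtain ⟨ζ, hζN, hζ⟩ := exists_pow_eq_inv_mul_smul_of_cocycle hprim
    (fun a ha => hm ▸ NumberField.pow_torsionOrder_eq_one N.ne_zero ha) f hmem hcocycle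
  refine ⟨ζ ^ 2, pow_mem hζN 2, fun g => ?_⟩
  rw [pow_mul', hζ g, mul_pow, inv_pow, smul_pow']
end

section
/- Let p be an odd prime, let z ∈ ℤ_p be a root of unity with z ≢ 0, 1 (mod p), and suppose p ≥ 5 and Σ_{k=1}^{p-1} k² z̄^k = 0 in 𝔽_p, where z̄ is the reduction of z modulo p. Then z = -1. -/
/-!
Multiplying by `(x - 1)³` evaluates the sum in closed form:
`(x - 1)³ · Σ_{k<p} k² x^k = x³ - x` in `𝔽_p` (use `p = 0` and `x^p = x`), so the residue
`z̄` is `-1`. Then `z` and `-1` are roots of unity in `ℤ_p` that agree modulo `p`, and the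
lifting-the-exponent lemma forces `z = -1`: for `p ∣ x - y`, `p ∤ x` and odd `p`, the
`p`-adic valuation of `x^n - y^n` is `v(x - y) + v(n)`, so `x^n = y^n` forces `v(x - y) = ∞`.
-/

open Finset

theorem sub_one_pow_three_mul_sum_range_sq_mul_pow {R : Type*} [CommRing R] (x : R) (n : ℕ) :
    (x - 1) ^ 3 * ∑ k ∈ range n, (k : R) ^ 2 * x ^ k =
      (((n : R) - 1) ^ 2 * x ^ 2 - (2 * (n : R) ^ 2 - 2 * n - 1) * x + (n : R) ^ 2) * x ^ n
        - x ^ 2 - x := by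
  induction n with
  | zero => simp
  | succ n ih =>
    rw [sum_range_succ, mul_add, ih]
    push_cast
    ring

theorem ZMod.eq_neg_one_of_sum_sq_mul_pow_eq_zero {p : ℕ} [Fact p.Prime] {x : ZMod p}
    (h0 : x ≠ 0) (h1 : x ≠ 1)
    (hsum : ∑ k ∈ Icc 1 (p - 1), (k : ZMod p) ^ 2 * x ^ k = 0) : x = -1 := by
  have hrange : ∑ k ∈ range p, (k : ZMod p) ^ 2 * x ^ k = 0 := by
    rw [range_eq_Ico, sum_eq_sum_Ico_succ_bot (Fact.out : p.Prime).pos,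
      ← Icc_sub_one_right_eq_Ico_of_not_isMin (by simpa using (Fact.out : p.Prime).ne_zero)]
    simpa using hsum
  have key := sub_one_pow_three_mul_sum_range_sq_mul_pow x p
  rw [hrange, ZMod.natCast_self, ZMod.pow_card] at key
  have hcubic : x * (x - 1) * (x + 1) = 0 := by linear_combination -key
  rcases mul_eq_zero.1 hcubic with h | h
  · rcases mul_eq_zero.1 h with h | h
    · exact absurd h h0
    · exact absurd (sub_eq_zero.1 h) h1
  · exact eq_neg_of_add_eq_zero_left h

theorem eq_of_pow_eq_pow_of_dvd_sub {R : Type*} [CommRing R] [IsDomain R] [WfDvdMonoid R]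
    {p : ℕ} (hp : p.Prime) (hp1 : Odd p) (hpR : Prime (p : R)) {x y : R} (hxy : ↑p ∣ x - y)
    (hx : ¬↑p ∣ x) {n : ℕ} (hn : n ≠ 0) (h : x ^ n = y ^ n) : x = y := by
  obtain ⟨a, m, hpm, rfl⟩ := Nat.exists_eq_pow_mul_and_not_dvd hn p hp.ne_one
  have hm : ¬(p : R) ∣ m := fun hdvd =>
    hpR.not_isUnit (((hp.coprime_iff_not_dvd.2 hpm).cast (R := R)).isUnit_of_dvd' dvd_rfl hdvd)
  have hlte : emultiplicity (p : R) (x ^ (p ^ a * m) - y ^ (p ^ a * m)) =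
      emultiplicity (p : R) (x - y) + a := by
    rw [pow_mul, pow_mul,
      emultiplicity_pow_sub_pow_of_prime hpR _ (fun h => hx (hpR.dvd_of_dvd_pow h)) hm,
      emultiplicity_pow_prime_pow_sub_pow_prime_pow hpR hp1 hxy hx]
    exact (dvd_pow_self _ a.succ_ne_zero).trans (dvd_sub_pow_of_dvd_sub hxy a)
  rw [h, sub_self, emultiplicity_zero, eq_comm, ENat.add_eq_top, emultiplicity_eq_top] at hlte
  by_contra hne
  exact hlte.elim (· (.of_prime_left hpR (sub_ne_zero.2 hne))) (ENat.natCast_ne_top a)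

theorem PadicInt.p_dvd_iff_toZMod_eq_zero {p : ℕ} [Fact p.Prime] {x : ℤ_[p]} :
    (p : ℤ_[p]) ∣ x ↔ toZMod x = 0 := by
  rw [← RingHom.mem_ker, ker_toZMod, maximalIdeal_eq_span_p, Ideal.mem_span_singleton]

theorem stmt_17_general (p : ℕ) [Fact p.Prime] (hp2 : p ≠ 2)
    (z : ℤ_[p]) (hz : ∃ n : ℕ, 1 ≤ n ∧ z ^ n = 1)
    (h0 : PadicInt.toZMod z ≠ 0) (h1 : PadicInt.toZMod z ≠ 1)
    (hsum : ∑ k ∈ Finset.Icc 1 (p - 1),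
        (k : ZMod p) ^ 2 * (PadicInt.toZMod z) ^ k = 0) :
    z = -1 := by
  obtain ⟨n, hn, hzn⟩ := hz
  have hp : p.Prime := Fact.out
  have hz_bar : PadicInt.toZMod z = -1 := ZMod.eq_neg_one_of_sum_sq_mul_pow_eq_zero h0 h1 hsum
  refine eq_of_pow_eq_pow_of_dvd_sub hp (hp.odd_of_ne_two hp2) PadicInt.prime_p ?_ ?_
    (n := 2 * n) (by omega) ?_
  · rw [PadicInt.p_dvd_iff_toZMod_eq_zero, map_sub, map_neg, map_one, hz_bar, sub_self]
  · rwa [PadicInt.p_dvd_iff_toZMod_eq_zero]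
  · rw [pow_mul', hzn, one_pow, pow_mul, neg_one_sq, one_pow]

/-- Let `p ≥ 5` be an odd prime and `z ∈ ℤ_p` a root of unity whose reduction
`z̄ ∈ 𝔽_p` satisfies `z̄ ≠ 0`, `z̄ ≠ 1` and `Σ_{k=1}^{p-1} k² z̄^k = 0`.
Then `z = -1`. -/
theorem stmt_17 (p : ℕ) [Fact p.Prime] (hp2 : p ≠ 2) (hp5 : 5 ≤ p)
    (z : ℤ_[p]) (hz : ∃ n : ℕ, 1 ≤ n ∧ z ^ n = 1)
    (h0 : PadicInt.toZMod z ≠ 0) (h1 : PadicInt.toZMod z ≠ 1)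
    (hsum : ∑ k ∈ Finset.Icc 1 (p - 1),
        (k : ZMod p) ^ 2 * (PadicInt.toZMod z) ^ k = 0) :
    z = -1 :=
  stmt_17_general p hp2 z hz h0 h1 hsum
end
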